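/- Let Gamma be a discrete subgroup of PSL_2(C), C a circle in C-hat, and xi a point of C fixed by a parabolic element gamma of Gamma that does not stabilize C. Then the orbit {gamma^k C : k in Z} is an infinite family of pairwise tangent circles all tangent at xi (after conjugating xi to infinity, they are distinct parallel lines). In particular, if Gamma(C) contains no infinite bouquet of tangent circles glued at xi, then every parabolic element of Gamma fixing xi stabilizes C. -/

import Mathlib

open Matrix OnePoint

noncomputable section

/-- The Möbius action of `PSL₂(ℂ)` (realized by determinant-one matrices) on the
extended complex plane `ℂ̂ = ℂ ∪ {∞}`. -/
def mob (g : Matrix (Fin 2) (Fin 2) ℂ) (w : OnePoint ℂ) : OnePoint ℂ :=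
  match w with
  | OnePoint.infty => if g 1 0 = 0 then ∞ else ((g 0 0 / g 1 0 : ℂ) : OnePoint ℂ)
  | OnePoint.some z => if g 1 0 * z + g 1 1 = 0 then ∞
      else (((g 0 0 * z + g 0 1) / (g 1 0 * z + g 1 1) : ℂ) : OnePoint ℂ)

/-- The circle in `ℂ̂` with center `c` and radius `r`. -/
def circleSet (c : ℂ) (r : ℝ) : Set (OnePoint ℂ) :=
  {w | ∃ z : ℂ, w = (z : OnePoint ℂ) ∧ ‖z - c‖ = r}

/-- The line in `ℂ̂` through `v` with direction `u`, together with `∞`. -/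
def lineSet (v u : ℂ) : Set (OnePoint ℂ) :=
  insert ∞ {w | ∃ t : ℝ, w = ((v + (t : ℂ) * u : ℂ) : OnePoint ℂ)}

/-- `g` is a generalized circle (a Euclidean circle, or a line together with `∞`). -/
def IsGenCircle (C : Set (OnePoint ℂ)) : Prop :=
  (∃ c r, 0 < r ∧ C = circleSet c r) ∨ (∃ v u, u ≠ 0 ∧ C = lineSet v u)

/-- `g` is parabolic iff it has a unique fixed point in `ℂ̂`. -/
def IsParabolic (g : Matrix.SpecialLinearGroup (Fin 2) ℂ) : Prop :=
  ∃! w : OnePoint ℂ, mob (↑g) w = w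

/-!
Send `ξ` to `∞` by a Möbius map `ψ`. Then `C` becomes a line `L`, and a parabolic `γ` fixing `ξ`
becomes an element whose only fixed point is `∞`, i.e. a translation `z ↦ z + t`. Hence
`γ ^ k C = ψ (L + k t)`. If `t` were parallel to `L`, `γ` would stabilize `C`; otherwise the lines
`L + k t` are distinct parallel lines, any two of which meet only at `∞`, and `ψ` carries them to
a bouquet of circles tangent at `ξ`.
-/

open scoped MatrixGroups Pointwise
open Matrix.SpecialLinearGroup (toGL)

lemma mob_eq_smul (g : SL(2, ℂ)) (w : OnePoint ℂ) :
    mob (g : Matrix (Fin 2) (Fin 2) ℂ) w = toGL g • w := by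
  -- `congr` reconciles the `Decidable` instances of the two `if`s
  cases w with
  | infty => rw [smul_infty_eq_ite]; simp only [mob]; congr
  | coe z => rw [smul_some_eq_ite]; simp only [mob]; congr

lemma image_mob_eq_smul (g : SL(2, ℂ)) (S : Set (OnePoint ℂ)) :
    mob (g : Matrix (Fin 2) (Fin 2) ℂ) '' S = toGL g • S := by
  simp only [mob_eq_smul, Set.image_smul]

lemma mob_injective (g : SL(2, ℂ)) : Function.Injective (mob (g : Matrix (Fin 2) (Fin 2) ℂ)) := by
  simpa only [funext (mob_eq_smul g)] using MulAction.injective (toGL g)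

lemma mob_surjective (g : SL(2, ℂ)) :
    Function.Surjective (mob (g : Matrix (Fin 2) (Fin 2) ℂ)) := by
  simpa only [funext (mob_eq_smul g)] using MulAction.surjective (toGL g)

lemma IsParabolic.smul_eq_self_iff {γ : SL(2, ℂ)} (hγ : IsParabolic γ) {ξ : OnePoint ℂ}
    (hξ : mob γ ξ = ξ) (w : OnePoint ℂ) : toGL γ • w = w ↔ w = ξ := by
  rw [← mob_eq_smul]
  exact ⟨fun hw => hγ.unique hw hξ, fun hw => hw ▸ hξ⟩

lemma MulAction.conj_smul_eq_self_iff {G α : Type*} [Group G] [MulAction G α] {g : G} {ξ : α}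
    (hg : ∀ w : α, g • w = w ↔ w = ξ) (h : G) (w : α) :
    (h⁻¹ * g * h) • w = w ↔ w = h⁻¹ • ξ := by
  rw [mul_smul, mul_smul, inv_smul_eq_iff, hg, eq_inv_smul_iff]

lemma exists_smul_eq_map_add_of_fixes_only_infty {K : Type*} [Field K] [DecidableEq K]
    {g : GL (Fin 2) K} (hg : ∀ w : OnePoint K, g • w = w ↔ w = ∞) :
    ∃ t : K, ∀ w : OnePoint K, g • w = w.map (· + t) := by
  have hc : g 1 0 = 0 := smul_infty_eq_self_iff.1 ((hg ∞).2 rfl)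
  have hd : g 1 1 ≠ 0 := by
    have := g.det_ne_zero
    rw [Matrix.det_fin_two, hc] at this
    exact right_ne_zero_of_mul (by simpa using this)
  have hsmul (z : K) : g • (z : OnePoint K) = ((g 0 0 * z + g 0 1) / g 1 1 : K) := by
    simp [smul_some_eq_ite, hc, hd]
  -- otherwise `g` would also have a finite fixed point
  have had : g 0 0 = g 1 1 := by
    by_contra h
    have hfix := (hg ((g 0 1 / (g 1 1 - g 0 0) : K))).1 (by
      rw [hsmul, OnePoint.coe_eq_coe]
      field_simp [sub_ne_zero.2 (Ne.symm h)]
      ring)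
    exact OnePoint.coe_ne_infty _ hfix
  refine ⟨g 0 1 / g 1 1, fun w => ?_⟩
  cases w with
  | infty => exact (hg ∞).2 rfl
  | coe z =>
    rw [hsmul, had, OnePoint.map_some, OnePoint.coe_eq_coe]
    field_simp

lemma zpow_smul_eq_map_add {G A : Type*} [Group G] [AddCommGroup A] [MulAction G (OnePoint A)]
    {g : G} {t : A} (h : ∀ w : OnePoint A, g • w = w.map (· + t)) (k : ℤ) (w : OnePoint A) :
    g ^ k • w = w.map (· + k • t) := by
  induction k using Int.induction_on generalizing w with
  | zero => cases w <;> simp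
  | succ n ih =>
    rw [_root_.zpow_add_one, mul_smul, h, ih]
    cases w with
    | infty => rfl
    | coe z => simp only [OnePoint.map_some, OnePoint.coe_eq_coe]; module
  | pred n ih =>
    have hinv : g⁻¹ • w = w.map (· - t) := inv_smul_eq_iff.2 (by cases w <;> simp [h])
    rw [_root_.zpow_sub_one, mul_smul, hinv, ih]
    cases w with
    | infty => rfl
    | coe z => simp only [OnePoint.map_some, OnePoint.coe_eq_coe]; module

section Complex

open Complex

lemma exists_ofReal_eq_iff (z : ℂ) : (∃ t : ℝ, z = t) ↔ z.im = 0 :=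
  ⟨fun ⟨t, ht⟩ => ht ▸ ofReal_im t, fun h => ⟨z.re, Complex.ext rfl (by simpa using h)⟩⟩

lemma norm_one_add_eq_norm_iff (p : ℂ) : ‖1 + p‖ = ‖p‖ ↔ p.re = -1 / 2 := by
  rw [← sq_eq_sq₀ (norm_nonneg _) (norm_nonneg _), Complex.sq_norm, Complex.sq_norm,
    normSq_apply, normSq_apply]
  simp only [add_re, one_re, add_im, one_im, zero_add]
  constructor <;> intro h <;> linarith

lemma norm_neg_inv_sub_eq_norm_iff {w : ℂ} (hw : w ≠ 0) (d : ℂ) :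
    ‖-w⁻¹ - d‖ = ‖d‖ ↔ (d * w).re = -1 / 2 := by
  have hsub : -w⁻¹ - d = -((1 + d * w) * w⁻¹) := by field_simp; ring
  have hd : ‖d‖ = ‖d * w‖ * ‖w⁻¹‖ := by rw [← norm_mul, mul_inv_cancel_right₀ hw]
  rw [hsub, hd, norm_neg, norm_mul, mul_left_inj' (by simpa using hw), norm_one_add_eq_norm_iff]

lemma infty_mem_lineSet (v u : ℂ) : ∞ ∈ lineSet v u := Set.mem_insert _ _

lemma coe_mem_lineSet_iff {v u : ℂ} (hu : u ≠ 0) (z : ℂ) :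
    (z : OnePoint ℂ) ∈ lineSet v u ↔ ((z - v) / u).im = 0 := by
  rw [← exists_ofReal_eq_iff]
  simp only [lineSet, Set.mem_insert_iff, OnePoint.coe_ne_infty, false_or, Set.mem_ofPred_eq,
    OnePoint.coe_eq_coe]
  refine exists_congr fun t => ?_
  rw [div_eq_iff hu]
  constructor <;> intro h <;> linear_combination h

lemma coe_mem_lineSet_div_iff {d : ℂ} (hd : d ≠ 0) (a : ℝ) (w : ℂ) :
    (w : OnePoint ℂ) ∈ lineSet (a / d) (I / d) ↔ (d * w).re = a := by
  have h : (w - a / d) / (I / d) = -I * (d * w - a) := by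
    field_simp
    linear_combination (d * w - a) * I_sq
  rw [coe_mem_lineSet_iff (div_ne_zero I_ne_zero hd), h]
  simp [sub_eq_zero, eq_comm]

lemma map_add_image_lineSet (t v u : ℂ) :
    OnePoint.map (· + t) '' lineSet v u = lineSet (v + t) u := by
  simp only [lineSet, Set.image_insert_eq, OnePoint.map_infty]
  congr 1
  ext w
  simp only [Set.mem_image, Set.mem_ofPred_eq]
  constructor
  · rintro ⟨_, ⟨s, rfl⟩, rfl⟩
    exact ⟨s, by simp [add_right_comm]⟩
  · rintro ⟨s, rfl⟩
    exact ⟨_, ⟨s, rfl⟩, by simp [add_right_comm]⟩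

lemma lineSet_eq_of_im_eq_zero {v₁ v₂ u : ℂ} (hu : u ≠ 0) (h : ((v₁ - v₂) / u).im = 0) :
    lineSet v₁ u = lineSet v₂ u := by
  ext w
  cases w with
  | infty => simp [infty_mem_lineSet]
  | coe w =>
    have hw : (w - v₂) / u = (w - v₁) / u + (v₁ - v₂) / u := by ring
    rw [coe_mem_lineSet_iff hu, coe_mem_lineSet_iff hu, hw, add_im, h, add_zero]

lemma lineSet_inter_lineSet {v₁ v₂ u : ℂ} (hu : u ≠ 0) (h : ((v₁ - v₂) / u).im ≠ 0) :
    lineSet v₁ u ∩ lineSet v₂ u = {∞} := by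
  ext w
  cases w with
  | infty => simp [infty_mem_lineSet]
  | coe w =>
    simp only [Set.mem_inter_iff, coe_mem_lineSet_iff hu, Set.mem_singleton_iff,
      OnePoint.coe_ne_infty, iff_false, not_and]
    intro h₁ h₂
    have hv : (v₁ - v₂) / u = (w - v₂) / u - (w - v₁) / u := by ring
    rw [hv, sub_im, h₁, h₂, sub_zero] at h
    exact h rfl

lemma coe_mem_circleSet_iff (c z : ℂ) (r : ℝ) :
    (z : OnePoint ℂ) ∈ circleSet c r ↔ ‖z - c‖ = r := by
  simp [circleSet]

lemma infty_notMem_circleSet (c : ℂ) (r : ℝ) : ∞ ∉ circleSet c r := by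
  simp [circleSet]

def subInv (z₀ : ℂ) : SL(2, ℂ) := ⟨!![z₀, -1; 1, 0], by simp [Matrix.det_fin_two_of]⟩

lemma mob_subInv_infty (z₀ : ℂ) : mob (subInv z₀) ∞ = z₀ := by
  simp [mob, subInv]

lemma mob_subInv_zero (z₀ : ℂ) : mob (subInv z₀) (0 : ℂ) = ∞ := by
  simp [mob, subInv]

lemma mob_subInv_coe (z₀ : ℂ) {w : ℂ} (hw : w ≠ 0) : mob (subInv z₀) w = ↑(z₀ - w⁻¹) := by
  simp [mob, subInv, hw, sub_eq_add_neg, div_eq_mul_inv, add_mul]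

lemma preimage_mob_subInv_circleSet {z₀ c : ℂ} (hc : c ≠ z₀) {r : ℝ} (hz₀ : ‖z₀ - c‖ = r) :
    mob (subInv z₀) ⁻¹' circleSet c r = lineSet ((-1 / 2 : ℝ) / (c - z₀)) (I / (c - z₀)) := by
  ext w
  cases w with
  | infty => simpa [mob_subInv_infty, infty_mem_lineSet, coe_mem_circleSet_iff] using hz₀
  | coe w =>
    rw [Set.mem_preimage, coe_mem_lineSet_div_iff (sub_ne_zero.2 hc)]
    rcases eq_or_ne w 0 with rfl | hw
    · norm_num [mob_subInv_zero, infty_notMem_circleSet]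
    · rw [mob_subInv_coe z₀ hw, coe_mem_circleSet_iff, ← hz₀, norm_sub_rev z₀,
        ← norm_neg_inv_sub_eq_norm_iff hw]
      ring_nf

lemma preimage_mob_subInv_lineSet {z₀ v u : ℂ} (hu : u ≠ 0)
    (hz₀ : (z₀ : OnePoint ℂ) ∈ lineSet v u) : mob (subInv z₀) ⁻¹' lineSet v u = lineSet 0 u⁻¹ := by
  rw [coe_mem_lineSet_iff hu] at hz₀
  ext w
  cases w with
  | infty => simpa [mob_subInv_infty, infty_mem_lineSet, coe_mem_lineSet_iff hu] using hz₀
  | coe w =>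
    rw [Set.mem_preimage, coe_mem_lineSet_iff (inv_ne_zero hu)]
    rcases eq_or_ne w 0 with rfl | hw
    · simp [mob_subInv_zero, infty_mem_lineSet]
    · have h : (z₀ - w⁻¹ - v) / u = (z₀ - v) / u - (w * u)⁻¹ := by ring
      rw [mob_subInv_coe z₀ hw, coe_mem_lineSet_iff hu, h, sub_im, hz₀, zero_sub, neg_eq_zero,
        inv_im, neg_div, neg_eq_zero, div_eq_zero_iff, sub_zero, div_inv_eq_mul]
      simp [hw, hu]

lemma exists_eq_image_mob_lineSet {C : Set (OnePoint ℂ)} (hC : IsGenCircle C) {ξ : OnePoint ℂ}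
    (hξ : ξ ∈ C) : ∃ ψ : SL(2, ℂ), mob ψ ∞ = ξ ∧ ∃ v u : ℂ, u ≠ 0 ∧ C = mob ψ '' lineSet v u := by
  cases ξ with
  | infty =>
    refine ⟨1, by simp [mob], ?_⟩
    rcases hC with ⟨c, r, -, rfl⟩ | ⟨v, u, hu, rfl⟩
    · exact absurd hξ (infty_notMem_circleSet c r)
    · exact ⟨v, u, hu, by rw [image_mob_eq_smul, map_one, one_smul]⟩
  | coe z₀ =>
    refine ⟨subInv z₀, mob_subInv_infty z₀, ?_⟩
    rcases hC with ⟨c, r, hr, rfl⟩ | ⟨v, u, hu, rfl⟩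
    · have hz₀ := (coe_mem_circleSet_iff _ _ _).1 hξ
      have hc : c ≠ z₀ := fun h => hr.ne' (by simpa [h] using hz₀.symm)
      rw [← Set.image_preimage_eq (circleSet c r) (mob_surjective _),
        preimage_mob_subInv_circleSet hc hz₀]
      exact ⟨_, _, div_ne_zero I_ne_zero (sub_ne_zero.2 hc), rfl⟩
    · rw [← Set.image_preimage_eq (lineSet v u) (mob_surjective _),
        preimage_mob_subInv_lineSet hu hξ]
      exact ⟨0, u⁻¹, inv_ne_zero hu, rfl⟩

end Complex

lemma IsParabolic.exists_mob_zpow_image_lineSet_eq {γ ψ : SL(2, ℂ)} {ξ : OnePoint ℂ}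
    (hγ : IsParabolic γ) (hγξ : mob γ ξ = ξ) (hψ : mob ψ ∞ = ξ) :
    ∃ t : ℂ, ∀ (k : ℤ) (v u : ℂ),
      mob ↑(γ ^ k) '' (mob ψ '' lineSet v u) = mob ψ '' lineSet (v + k * t) u := by
  have hconj (w : OnePoint ℂ) : toGL (ψ⁻¹ * γ * ψ) • w = w ↔ w = ∞ := by
    rw [map_mul, map_mul, map_inv, MulAction.conj_smul_eq_self_iff (hγ.smul_eq_self_iff hγξ), ← hψ,
      mob_eq_smul, inv_smul_smul]
  obtain ⟨t, ht⟩ := exists_smul_eq_map_add_of_fixes_only_infty hconj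
  refine ⟨t, fun k v u => ?_⟩
  have hzpow : γ ^ k * ψ = ψ * (ψ⁻¹ * γ * ψ) ^ k := by
    have := conj_zpow (a := ψ⁻¹) (b := γ) (i := k)
    rw [inv_inv] at this
    rw [this]
    group
  rw [image_mob_eq_smul, image_mob_eq_smul, image_mob_eq_smul, smul_smul, ← map_mul, hzpow,
    map_mul, mul_smul, map_zpow]
  congr 1
  rw [← Set.image_smul, funext (zpow_smul_eq_map_add ht k), zsmul_eq_mul, map_add_image_lineSet]

def IsBouquetAt {ι α : Type*} (f : ι → Set α) (x : α) : Prop :=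
  Function.Injective f ∧ ∀ i j, i ≠ j → f i ∩ f j = {x}

lemma IsBouquetAt.of_inter_eq_singleton {ι α : Type*} {f : ι → Set α} {x : α}
    (hf : ∀ i j, i ≠ j → f i ∩ f j = {x}) (hne : ∀ i, f i ≠ {x}) : IsBouquetAt f x :=
  ⟨fun i j hij => by_contra fun h => hne i (by simpa [hij] using hf i j h), hf⟩

lemma IsBouquetAt.image {ι α β : Type*} {f : ι → Set α} {x : α} (hf : IsBouquetAt f x)
    {e : α → β} (he : Function.Injective e) : IsBouquetAt (fun i => e '' f i) (e x) :=
  ⟨(Set.image_injective.2 he).comp hf.1, fun i j hij => by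
    rw [← Set.image_inter he, hf.2 i j hij, Set.image_singleton]⟩

lemma isBouquetAt_lineSet {t u : ℂ} (hu : u ≠ 0) (ht : (t / u).im ≠ 0) (v : ℂ) :
    IsBouquetAt (fun k : ℤ => lineSet (v + k * t) u) ∞ := by
  refine .of_inter_eq_singleton (fun k l hkl => lineSet_inter_lineSet hu ?_) fun k hk => ?_
  · have hv : (v + k * t - (v + l * t)) / u = ((k - l : ℤ) : ℝ) * (t / u) := by push_cast; ring
    rw [hv, Complex.im_ofReal_mul]
    exact mul_ne_zero (by exact_mod_cast sub_ne_zero.2 hkl) ht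
  · have hmem : ((v + k * t : ℂ) : OnePoint ℂ) ∈ lineSet (v + k * t) u :=
      (coe_mem_lineSet_iff hu _).2 (by simp)
    rw [hk] at hmem
    exact OnePoint.coe_ne_infty _ hmem

/-- Let `C` be a circle, `ξ ∈ C`, and `γ` a parabolic element fixing `ξ` that does
not stabilize `C`.  Then the orbit `{γ^k C : k ∈ ℤ}` is an infinite family of
distinct circles, pairwise tangent at `ξ` (any two distinct members meet exactly
in `{ξ}`).  In particular, if the `Γ`-orbit of `C` contains no infinite bouquet
of circles glued (pairwise tangent) at `ξ`, then every parabolic element of `Γ`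
fixing `ξ` stabilizes `C`. -/
theorem parabolic_orbit_tangent_bouquet (C : Set (OnePoint ℂ)) (hC : IsGenCircle C)
    (ξ : OnePoint ℂ) (hξC : ξ ∈ C) :
    (∀ γ : Matrix.SpecialLinearGroup (Fin 2) ℂ, IsParabolic γ → mob (↑γ) ξ = ξ →
      mob (↑γ) '' C ≠ C →
      Function.Injective (fun k : ℤ => mob (↑(γ ^ k)) '' C) ∧
      ∀ k l : ℤ, k ≠ l →
        (mob (↑(γ ^ k)) '' C) ∩ (mob (↑(γ ^ l)) '' C) = {ξ}) ∧
    (∀ Γ : Subgroup (Matrix.SpecialLinearGroup (Fin 2) ℂ),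
      (¬ ∃ f : ℤ → Set (OnePoint ℂ), Function.Injective f ∧
        (∀ k, ∃ γ ∈ Γ, f k = mob (↑γ) '' C) ∧
        (∀ k l, k ≠ l → f k ∩ f l = {ξ})) →
      ∀ γ ∈ Γ, IsParabolic γ → mob (↑γ) ξ = ξ → mob (↑γ) '' C = C) := by
  obtain ⟨ψ, hψ, v, u, hu, rfl⟩ := exists_eq_image_mob_lineSet hC hξC
  have bouquet (γ : SL(2, ℂ)) (hγ : IsParabolic γ) (hγξ : mob γ ξ = ξ)
      (hγC : mob γ '' (mob ψ '' lineSet v u) ≠ mob ψ '' lineSet v u) :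
      IsBouquetAt (fun k : ℤ => mob ↑(γ ^ k) '' (mob ψ '' lineSet v u)) ξ := by
    obtain ⟨t, ht⟩ := hγ.exists_mob_zpow_image_lineSet_eq hγξ hψ
    have htu : (t / u).im ≠ 0 := by
      intro h
      apply hγC
      have hline : lineSet (v + t) u = lineSet v u :=
        lineSet_eq_of_im_eq_zero hu (by rwa [add_sub_cancel_left])
      simpa only [zpow_one, Int.cast_one, one_mul, hline] using ht 1 v u
    simpa only [ht, hψ] using (isBouquetAt_lineSet hu htu v).image (mob_injective ψ)
  refine ⟨bouquet, fun Γ hΓ γ hγΓ hγ hγξ => by_contra fun hγC => hΓ ?_⟩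
  obtain ⟨hinj, hinter⟩ := bouquet γ hγ hγξ hγC
  exact ⟨_, hinj, fun k => ⟨γ ^ k, zpow_mem hγΓ k, rfl⟩, hinter⟩
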